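/- Let s ≥ 1 be an integer, n = 2^{s+1} + 1, j = 2^s + 1, and let V > 2^{s+1} be a real. Consider keys 1, …, n where key j has weight V and every other key has weight 1. Then OPT({1,…,j}) = OPT({j,…,n}) = V + (s+1)·2^s and OPT({1,…,n}) = V + (s+2)·2^{s+1}; in particular OPT({1,…,j}) + OPT({j,…,n}) > OPT({j}) + OPT({1,…,n}), so the quadrangle inequality fails for optimal 2WCST costs. -/
import Mathlib


namespace TwoWCST

/-- A two-way comparison search tree: leaves hold keys, internal nodes are
equal-to tests `⟨= k⟩` or less-than tests `⟨< k⟩`, each with a yes and a no child. -/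
inductive CTree : Type where
  | leaf (k : ℕ) : CTree
  | eqTest (k : ℕ) (yes no : CTree) : CTree
  | ltTest (k : ℕ) (yes no : CTree) : CTree

/-- The leaf reached when searching for query `q`. -/
def searchKey : CTree → ℕ → ℕ
  | .leaf k, _ => k
  | .eqTest k y n, q => if q = k then searchKey y q else searchKey n q
  | .ltTest k y n, q => if q < k then searchKey y q else searchKey n q

/-- Number of comparisons on the search path of `q`. -/
def depthOf : CTree → ℕ → ℕ
  | .leaf _, _ => 0
  | .eqTest k y n, q => (if q = k then depthOf y q else depthOf n q) + 1
  | .ltTest k y n, q => (if q < k then depthOf y q else depthOf n q) + 1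

/-- The set of keys labeling the leaves of the tree. -/
def leaves : CTree → Finset ℕ
  | .leaf k => {k}
  | .eqTest _ y n => leaves y ∪ leaves n
  | .ltTest _ y n => leaves y ∪ leaves n

/-- `T` is a 2WCST for the sub-instance `I`: every leaf is labeled by a key of `I`,
and the search for every key `q ∈ I` ends at a leaf labeled `q`. -/
def Valid (I : Finset ℕ) (T : CTree) : Prop :=
  leaves T ⊆ I ∧ ∀ q ∈ I, searchKey T q = q

/-- Cost of a 2WCST: `∑ q ∈ I, w q * depth_T q`. -/
noncomputable def cost (w : ℕ → ℝ) (I : Finset ℕ) (T : CTree) : ℝ :=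
  ∑ q ∈ I, w q * (depthOf T q : ℝ)

/-- `T` is an optimal 2WCST for `I` (w.r.t. weights `w`). -/
def IsOptimal (w : ℕ → ℝ) (I : Finset ℕ) (T : CTree) : Prop :=
  Valid I T ∧ ∀ T', Valid I T' → cost w I T ≤ cost w I T'

/-- Total weight of the keys at the leaves of `T`. -/
noncomputable def treeWeight (w : ℕ → ℝ) (T : CTree) : ℝ :=
  ∑ k ∈ leaves T, w k

/-- Side-weight of the root node of `T`. -/
noncomputable def sw (w : ℕ → ℝ) : CTree → ℝ
  | .leaf _ => 0
  | .eqTest k _ _ => w k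
  | .ltTest _ y n => min (treeWeight w y) (treeWeight w n)

/-- The root of `T` is an equal-to test. -/
def EqRoot : CTree → Prop
  | .eqTest _ _ _ => True
  | _ => False

/-- The root of `T` is a less-than test. -/
def LtRoot : CTree → Prop
  | .ltTest _ _ _ => True
  | _ => False

/-- `T` is rooted at two consecutive equal-to tests: the root is an equal-to test
and the root of its 'no' subtree is also an equal-to test. -/
def TwoEqRoot : CTree → Prop
  | .eqTest _ _ (.eqTest _ _ _) => True
  | _ => False

/-- All internal nodes of `T` are equal-to tests. -/
def OnlyEq : CTree → Prop
  | .leaf _ => True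
  | .eqTest _ y n => OnlyEq y ∧ OnlyEq n
  | .ltTest _ _ _ => False

/-- All internal nodes of `T` are less-than tests. -/
def OnlyLt : CTree → Prop
  | .leaf _ => True
  | .eqTest _ _ _ => False
  | .ltTest _ y n => OnlyLt y ∧ OnlyLt n

/-- `M` is the main branch of (the root of) `T`: the 'no' child for an equal-to
test, and a child subtree of maximum total weight for a less-than test
(either choice allowed in case of ties). -/
def IsMainBranch (w : ℕ → ℝ) (T M : CTree) : Prop :=
  match T with
  | .leaf _ => False
  | .eqTest _ _ n => M = n
  | .ltTest _ y n => (M = y ∧ treeWeight w n ≤ treeWeight w y) ∨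
      (M = n ∧ treeWeight w y ≤ treeWeight w n)

/-- `OPT I`: the minimum cost of a 2WCST for `I`. -/
noncomputable def OPT (w : ℕ → ℝ) (I : Finset ℕ) : ℝ :=
  sInf {c | ∃ T, Valid I T ∧ cost w I T = c}

/-- `C^=(I)`: the minimum cost of a 2WCST for `I` rooted at an equal-to test. -/
noncomputable def CEq (w : ℕ → ℝ) (I : Finset ℕ) : ℝ :=
  sInf {c | ∃ T, Valid I T ∧ EqRoot T ∧ cost w I T = c}

/-- `C^<(I)`: the minimum cost of a 2WCST for `I` rooted at a less-than test. -/
noncomputable def CLt (w : ℕ → ℝ) (I : Finset ℕ) : ℝ :=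
  sInf {c | ∃ T, Valid I T ∧ LtRoot T ∧ cost w I T = c}


lemma two_zpow_lower (u : ℤ) : 1 + (u:ℝ)/2 ≤ (2:ℝ) ^ u := by
  rcases u with n | m
  · show 1 + ((n:ℤ):ℝ)/2 ≤ (2:ℝ) ^ ((n:ℕ):ℤ)
    rw [zpow_natCast]
    push_cast
    have h : 1 + (n:ℝ) * 1 ≤ (1 + 1) ^ n := one_add_mul_le_pow (by norm_num) n
    have hn : (0:ℝ) ≤ n := Nat.cast_nonneg n
    norm_num at h
    linarith
  · rcases Nat.eq_zero_or_pos m with hm | hm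
    · subst hm; norm_num [zpow_negSucc]
    · have h1 : (2:ℝ) ^ (Int.negSucc m) > 0 := by positivity
      have hm1 : (1:ℝ) ≤ m := by exact_mod_cast hm
      have h2 : ((Int.negSucc m : ℤ) : ℝ) = -((m:ℝ)+1) := by
        rw [Int.negSucc_eq]; push_cast; ring
      rw [h2]
      linarith

lemma pow_inv_lb (k d : ℕ) : 1 + ((k:ℝ) - d)/2 ≤ (2:ℝ)^k * ((2:ℝ)^d)⁻¹ := by
  have h := two_zpow_lower ((k:ℤ) - d)
  rw [zpow_sub₀ (by norm_num : (2:ℝ) ≠ 0), zpow_natCast, zpow_natCast,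
    div_eq_mul_inv] at h
  push_cast at h
  exact h

lemma sum_depth_lb (S : Finset ℕ) (d : ℕ → ℕ) (r t : ℕ) (hcard : S.card = 2^r)
    (h : ∑ q ∈ S, ((2:ℝ) ^ d q)⁻¹ ≤ ((2:ℝ)^t)⁻¹) :
    ((r:ℝ)+t) * 2^r ≤ ∑ q ∈ S, (d q : ℝ) := by
  set k := r + t with hk
  have h1 : ∀ q ∈ S, 1 + ((k:ℝ) - d q)/2 ≤ (2:ℝ)^k * ((2:ℝ)^(d q))⁻¹ :=
    fun q _ => pow_inv_lb k (d q)
  have h2 := Finset.sum_le_sum h1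
  rw [Finset.sum_add_distrib, Finset.sum_const, ← Finset.mul_sum] at h2
  have h3 : (2:ℝ)^k * ∑ q ∈ S, ((2:ℝ)^(d q))⁻¹ ≤ (2:ℝ)^k * ((2:ℝ)^t)⁻¹ :=
    mul_le_mul_of_nonneg_left h (by positivity)
  have h4 : (2:ℝ)^k * ((2:ℝ)^t)⁻¹ = 2^r := by
    rw [hk, pow_add]; field_simp
  have h5 : ∑ q ∈ S, ((k:ℝ) - d q)/2 = ((S.card : ℝ) * k - ∑ q ∈ S, (d q:ℝ))/2 := by
    rw [← Finset.sum_div, Finset.sum_sub_distrib, Finset.sum_const, nsmul_eq_mul]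
  rw [h5, hcard, nsmul_eq_mul] at h2
  have h6 := le_trans h2 (h4 ▸ h3)
  have hkr : (k:ℝ) = (r:ℝ) + t := by push_cast [hk]; ring
  have hcr : ((2^r : ℕ):ℝ) = (2:ℝ)^r := by push_cast; ring
  rw [hcr, hkr] at h6
  linarith

lemma kraft (T : CTree) : ∀ S : Finset ℕ,
    (∀ a ∈ S, ∀ b ∈ S, searchKey T a = searchKey T b → a = b) →
    ∑ q ∈ S, ((2:ℝ) ^ depthOf T q)⁻¹ ≤ 1 := by
  induction T with
  | leaf k =>
    intro S hS
    have hcard : S.card ≤ 1 := Finset.card_le_one.mpr (fun a ha b hb => hS a ha b hb rfl)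
    simp only [depthOf, pow_zero, inv_one, Finset.sum_const, nsmul_eq_mul, mul_one]
    exact_mod_cast hcard
  | eqTest k y n ihy ihn =>
    intro S hS
    classical
    rw [← Finset.sum_filter_add_sum_filter_not S (fun q => q = k)]
    have hy : ∑ q ∈ S.filter (fun q => q = k), ((2:ℝ) ^ depthOf (CTree.eqTest k y n) q)⁻¹
        = (∑ q ∈ S.filter (fun q => q = k), ((2:ℝ) ^ depthOf y q)⁻¹) / 2 := by
      rw [Finset.sum_div]
      refine Finset.sum_congr rfl (fun q hq => ?_)
      have hqk : q = k := (Finset.mem_filter.mp hq).2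
      simp only [depthOf, if_pos hqk, pow_succ, mul_inv]
      ring
    have hn' : ∑ q ∈ S.filter (fun q => ¬ q = k), ((2:ℝ) ^ depthOf (CTree.eqTest k y n) q)⁻¹
        = (∑ q ∈ S.filter (fun q => ¬ q = k), ((2:ℝ) ^ depthOf n q)⁻¹) / 2 := by
      rw [Finset.sum_div]
      refine Finset.sum_congr rfl (fun q hq => ?_)
      have hqk : ¬ q = k := (Finset.mem_filter.mp hq).2
      simp only [depthOf, if_neg hqk, pow_succ, mul_inv]
      ring
    have hby : ∑ q ∈ S.filter (fun q => q = k), ((2:ℝ) ^ depthOf y q)⁻¹ ≤ 1 := by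
      apply ihy
      intro a ha b hb _
      rw [(Finset.mem_filter.mp ha).2, (Finset.mem_filter.mp hb).2]
    have hbn : ∑ q ∈ S.filter (fun q => ¬ q = k), ((2:ℝ) ^ depthOf n q)⁻¹ ≤ 1 := by
      apply ihn
      intro a ha b hb hab
      obtain ⟨haS, hak⟩ := Finset.mem_filter.mp ha
      obtain ⟨hbS, hbk⟩ := Finset.mem_filter.mp hb
      apply hS a haS b hbS
      simpa [searchKey, hak, hbk] using hab
    rw [hy, hn']
    linarith
  | ltTest k y n ihy ihn =>
    intro S hS
    classical
    rw [← Finset.sum_filter_add_sum_filter_not S (fun q => q < k)]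
    have hy : ∑ q ∈ S.filter (fun q => q < k), ((2:ℝ) ^ depthOf (CTree.ltTest k y n) q)⁻¹
        = (∑ q ∈ S.filter (fun q => q < k), ((2:ℝ) ^ depthOf y q)⁻¹) / 2 := by
      rw [Finset.sum_div]
      refine Finset.sum_congr rfl (fun q hq => ?_)
      have hqk : q < k := (Finset.mem_filter.mp hq).2
      simp only [depthOf, if_pos hqk, pow_succ, mul_inv]
      ring
    have hn' : ∑ q ∈ S.filter (fun q => ¬ q < k), ((2:ℝ) ^ depthOf (CTree.ltTest k y n) q)⁻¹
        = (∑ q ∈ S.filter (fun q => ¬ q < k), ((2:ℝ) ^ depthOf n q)⁻¹) / 2 := by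
      rw [Finset.sum_div]
      refine Finset.sum_congr rfl (fun q hq => ?_)
      have hqk : ¬ q < k := (Finset.mem_filter.mp hq).2
      simp only [depthOf, if_neg hqk, pow_succ, mul_inv]
      ring
    have hby : ∑ q ∈ S.filter (fun q => q < k), ((2:ℝ) ^ depthOf y q)⁻¹ ≤ 1 := by
      apply ihy
      intro a ha b hb hab
      obtain ⟨haS, hak⟩ := Finset.mem_filter.mp ha
      obtain ⟨hbS, hbk⟩ := Finset.mem_filter.mp hb
      apply hS a haS b hbS
      simpa [searchKey, hak, hbk] using hab
    have hbn : ∑ q ∈ S.filter (fun q => ¬ q < k), ((2:ℝ) ^ depthOf n q)⁻¹ ≤ 1 := by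
      apply ihn
      intro a ha b hb hab
      obtain ⟨haS, hak⟩ := Finset.mem_filter.mp ha
      obtain ⟨hbS, hbk⟩ := Finset.mem_filter.mp hb
      apply hS a haS b hbS
      simpa [searchKey, hak, hbk] using hab
    rw [hy, hn']
    linarith

lemma depth_pos {I : Finset ℕ} {T : CTree} (hT : Valid I T) {a b : ℕ}
    (ha : a ∈ I) (hb : b ∈ I) (hab : a ≠ b) : 1 ≤ depthOf T a := by
  cases T with
  | leaf k =>
    have h1 : k = a := hT.2 a ha
    have h2 : k = b := hT.2 b hb
    exact absurd (h1 ▸ h2) hab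
  | eqTest k y n => exact Nat.succ_le_succ (Nat.zero_le _)
  | ltTest k y n => exact Nat.succ_le_succ (Nat.zero_le _)

lemma cost_lb (w : ℕ → ℝ) (I : Finset ℕ) (j : ℕ) (V : ℝ) (r : ℕ)
    (hj : j ∈ I) (hcard : (I.erase j).card = 2^r)
    (hw1 : ∀ q ∈ I.erase j, w q = 1) (hwj : w j = V) (hV : (2:ℝ)^r ≤ V)
    (T : CTree) (hT : Valid I T) :
    V + ((r:ℝ)+1) * 2^r ≤ cost w I T := by
  classical
  have hne : (I.erase j).Nonempty := by
    rw [← Finset.card_pos, hcard]; exact pow_pos two_pos r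
  obtain ⟨b, hb⟩ := hne
  have hbI : b ∈ I := Finset.mem_of_mem_erase hb
  have hbj : b ≠ j := Finset.ne_of_mem_erase hb
  have hdj : 1 ≤ depthOf T j := depth_pos hT hj hbI (Ne.symm hbj)
  have hkraft := kraft T I (fun a ha b' hb' hab => by
    rw [hT.2 a ha, hT.2 b' hb'] at hab; exact hab)
  have hsplit : ∑ q ∈ I, ((2:ℝ)^depthOf T q)⁻¹
      = ((2:ℝ)^depthOf T j)⁻¹ + ∑ q ∈ I.erase j, ((2:ℝ)^depthOf T q)⁻¹ :=
    (Finset.add_sum_erase I _ hj).symm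
  rw [hsplit] at hkraft
  have hcost : cost w I T = V * (depthOf T j : ℝ) + ∑ q ∈ I.erase j, (depthOf T q : ℝ) := by
    rw [cost, ← Finset.add_sum_erase I _ hj, hwj]
    congr 1
    exact Finset.sum_congr rfl (fun q hq => by rw [hw1 q hq, one_mul])
  rcases eq_or_lt_of_le hdj with h1 | h2
  · have hbud : ∑ q ∈ I.erase j, ((2:ℝ)^depthOf T q)⁻¹ ≤ ((2:ℝ)^1)⁻¹ := by
      rw [← h1] at hkraft
      norm_num at hkraft ⊢
      linarith
    have hD := sum_depth_lb (I.erase j) (depthOf T) r 1 hcard hbud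
    rw [hcost, ← h1]
    push_cast
    push_cast at hD
    linarith
  · have hbud : ∑ q ∈ I.erase j, ((2:ℝ)^depthOf T q)⁻¹ ≤ ((2:ℝ)^0)⁻¹ := by
      have hpos : (0:ℝ) ≤ ((2:ℝ)^depthOf T j)⁻¹ := by positivity
      norm_num
      linarith
    have hD := sum_depth_lb (I.erase j) (depthOf T) r 0 hcard hbud
    have hdj2 : (2:ℝ) ≤ (depthOf T j : ℝ) := by exact_mod_cast h2
    have hVpos : (0:ℝ) < V := lt_of_lt_of_le (by positivity) hV
    have hprod : 0 ≤ V * ((depthOf T j : ℝ) - 2) := mul_nonneg hVpos.le (by linarith)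
    have hexp : V * ((depthOf T j : ℝ) - 2) = V * (depthOf T j : ℝ) - 2*V := by ring
    rw [hcost]
    push_cast at hD
    linarith

lemma cost_eval (w : ℕ → ℝ) (I : Finset ℕ) (j : ℕ) (V : ℝ) (c : ℕ) (T : CTree)
    (hj : j ∈ I) (hwj : w j = V) (hw1 : ∀ q ∈ I.erase j, w q = 1)
    (hdj : depthOf T j = 1) (hd : ∀ q ∈ I.erase j, depthOf T q = c) :
    cost w I T = V + ((I.erase j).card : ℝ) * c := by
  have h2 : ∑ q ∈ I.erase j, w q * (depthOf T q : ℝ) = ∑ _q ∈ I.erase j, (c:ℝ) :=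
    Finset.sum_congr rfl (fun q hq => by rw [hw1 q hq, hd q hq, one_mul])
  rw [cost, ← Finset.add_sum_erase I _ hj, hwj, hdj, h2, Finset.sum_const, nsmul_eq_mul]
  norm_num

lemma opt_eq (w : ℕ → ℝ) (I : Finset ℕ) (c : ℝ) (T0 : CTree) (hT0 : Valid I T0)
    (hc0 : cost w I T0 = c) (hlb : ∀ T, Valid I T → c ≤ cost w I T) :
    OPT w I = c := by
  apply le_antisymm
  · exact csInf_le ⟨c, fun x ⟨T, hT, hx⟩ => hx ▸ hlb T hT⟩ ⟨T0, hT0, hc0⟩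
  · exact le_csInf ⟨c, T0, hT0, hc0⟩ (fun x ⟨T, hT, hx⟩ => hx ▸ hlb T hT)

lemma opt_single (w : ℕ → ℝ) (j : ℕ) (hw : 0 ≤ w j) : OPT w {j} = 0 := by
  apply opt_eq w {j} 0 (CTree.leaf j)
  · constructor
    · simp [leaves]
    · intro q hq
      rw [Finset.mem_singleton] at hq
      simp [searchKey, hq]
  · simp [cost, depthOf]
  · intro T hT
    rw [cost, Finset.sum_singleton]
    exact mul_nonneg hw (Nat.cast_nonneg _)

/-- A perfect less-than tree on the `2^r` consecutive keys `a, …, a + 2^r - 1`. -/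
def perfect : ℕ → ℕ → CTree
  | 0, a => .leaf a
  | r+1, a => .ltTest (a + 2^r) (perfect r a) (perfect r (a + 2^r))

lemma perfect_search : ∀ r a q, a ≤ q → q < a + 2^r →
    searchKey (perfect r a) q = q ∧ depthOf (perfect r a) q = r := by
  intro r
  induction r with
  | zero =>
    intro a q h1 h2
    have : q = a := by omega
    simp [perfect, searchKey, depthOf, this]
  | succ r ih =>
    intro a q h1 h2
    by_cases h : q < a + 2^r
    · have hih := ih a q h1 h
      simp [perfect, searchKey, depthOf, h, hih.1, hih.2]
    · have hq : a + 2^r ≤ q := le_of_not_gt h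
      have hp : 2^(r+1) = 2^r + 2^r := by rw [pow_succ]; omega
      have h2' : q < (a + 2^r) + 2^r := by omega
      have hih := ih (a + 2^r) q hq h2'
      simp [perfect, searchKey, depthOf, h, hih.1, hih.2]

lemma perfect_leaves : ∀ r a, leaves (perfect r a) ⊆ Finset.Ico a (a + 2^r) := by
  intro r
  induction r with
  | zero =>
    intro a
    simp only [perfect, leaves, Finset.singleton_subset_iff, Finset.mem_Ico]
    omega
  | succ r ih =>
    intro a x hx
    have hp : 2^(r+1) = 2^r + 2^r := by rw [pow_succ]; omega
    rcases Finset.mem_union.mp hx with h | h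
    · have := Finset.mem_Ico.mp (ih a h)
      rw [Finset.mem_Ico]
      omega
    · have := Finset.mem_Ico.mp (ih (a + 2^r) h)
      rw [Finset.mem_Ico]
      omega

lemma opt_value (w : ℕ → ℝ) (I : Finset ℕ) (j : ℕ) (V : ℝ) (r : ℕ)
    (hj : j ∈ I) (hcard : (I.erase j).card = 2^r)
    (hw1 : ∀ q ∈ I.erase j, w q = 1) (hwj : w j = V) (hV : (2:ℝ)^r ≤ V)
    (T0 : CTree) (hT0 : Valid I T0) (hdj : depthOf T0 j = 1)
    (hd : ∀ q ∈ I.erase j, depthOf T0 q = r + 1) :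
    OPT w I = V + ((r:ℝ)+1) * 2^r := by
  apply opt_eq w I _ T0 hT0
  · rw [cost_eval w I j V (r+1) T0 hj hwj hw1 hdj hd, hcard]
    push_cast
    ring
  · exact fun T hT => cost_lb w I j V r hj hcard hw1 hwj hV T hT

/-- A large counter-example to the quadrangle inequality: `n = 2^{s+1}+1` keys of
weight `1` except key `j = 2^s+1` of weight `V > 2^{s+1}`. -/
theorem stmt10 (s : ℕ) (hs : 1 ≤ s) (V : ℝ) (hV : (2 : ℝ) ^ (s + 1) < V) :
    OPT (fun k => if k = 2 ^ s + 1 then V else 1)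
        (Finset.Icc 1 (2 ^ s + 1)) = V + ((s : ℝ) + 1) * 2 ^ s ∧
    OPT (fun k => if k = 2 ^ s + 1 then V else 1)
        (Finset.Icc (2 ^ s + 1) (2 ^ (s + 1) + 1)) = V + ((s : ℝ) + 1) * 2 ^ s ∧
    OPT (fun k => if k = 2 ^ s + 1 then V else 1)
        (Finset.Icc 1 (2 ^ (s + 1) + 1)) = V + ((s : ℝ) + 2) * 2 ^ (s + 1) ∧
    OPT (fun k => if k = 2 ^ s + 1 then V else 1) ({2 ^ s + 1} : Finset ℕ)
        + OPT (fun k => if k = 2 ^ s + 1 then V else 1)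
            (Finset.Icc 1 (2 ^ (s + 1) + 1))
      < OPT (fun k => if k = 2 ^ s + 1 then V else 1)
            (Finset.Icc 1 (2 ^ s + 1))
        + OPT (fun k => if k = 2 ^ s + 1 then V else 1)
            (Finset.Icc (2 ^ s + 1) (2 ^ (s + 1) + 1)) := by
  have hp : 2^(s+1) = 2^s + 2^s := by rw [pow_succ]; omega
  have h1s : 1 ≤ 2^s := Nat.one_le_two_pow
  set w : ℕ → ℝ := fun k => if k = 2 ^ s + 1 then V else 1 with hw
  set j : ℕ := 2 ^ s + 1 with hjdef
  have hwj : w j = V := by simp [hw]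
  have h2pos : (0:ℝ) < 2^(s+1) := by positivity
  have hV0 : (0:ℝ) ≤ V := by linarith
  have hVs : (2:ℝ)^s ≤ V := by
    have : (2:ℝ)^s ≤ 2^(s+1) := pow_le_pow_right₀ one_le_two (Nat.le_succ s)
    linarith
  have hVs1 : (2:ℝ)^(s+1) ≤ V := hV.le
  -- Instance 1 : Icc 1 j
  have hj1 : j ∈ Finset.Icc 1 j := by rw [Finset.mem_Icc]; omega
  have hcard1 : ((Finset.Icc 1 j).erase j).card = 2^s := by
    rw [Finset.card_erase_of_mem hj1, Nat.card_Icc]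
    omega
  have hw1a : ∀ q ∈ (Finset.Icc 1 j).erase j, w q = 1 := by
    intro q hq
    rw [Finset.mem_erase] at hq
    simp only [hw]
    exact if_neg hq.1
  have hT1 : Valid (Finset.Icc 1 j) (CTree.eqTest j (CTree.leaf j) (perfect s 1)) := by
    constructor
    · intro x hx
      simp only [leaves] at hx
      rw [Finset.mem_Icc]
      rcases Finset.mem_union.mp hx with h | h
      · rw [Finset.mem_singleton] at h; omega
      · have := Finset.mem_Ico.mp (perfect_leaves s 1 h)
        omega
    · intro q hq
      rw [Finset.mem_Icc] at hq
      by_cases hqj : q = j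
      · simp [searchKey, hqj]
      · simp only [searchKey, if_neg hqj]
        exact (perfect_search s 1 q (by omega) (by omega)).1
  have hdj1 : depthOf (CTree.eqTest j (CTree.leaf j) (perfect s 1)) j = 1 := by
    simp [depthOf]
  have hd1 : ∀ q ∈ (Finset.Icc 1 j).erase j,
      depthOf (CTree.eqTest j (CTree.leaf j) (perfect s 1)) q = s + 1 := by
    intro q hq
    rw [Finset.mem_erase, Finset.mem_Icc] at hq
    simp only [depthOf, if_neg hq.1]
    rw [(perfect_search s 1 q (by omega) (by omega)).2]
  have hopt1 : OPT w (Finset.Icc 1 j) = V + ((s:ℝ)+1) * 2^s :=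
    opt_value w _ j V s hj1 hcard1 hw1a hwj hVs _ hT1 hdj1 hd1
  -- Instance 2 : Icc j (2^(s+1)+1)
  have hj2 : j ∈ Finset.Icc j (2^(s+1)+1) := by rw [Finset.mem_Icc]; omega
  have hcard2 : ((Finset.Icc j (2^(s+1)+1)).erase j).card = 2^s := by
    rw [Finset.card_erase_of_mem hj2, Nat.card_Icc]
    omega
  have hw2a : ∀ q ∈ (Finset.Icc j (2^(s+1)+1)).erase j, w q = 1 := by
    intro q hq
    rw [Finset.mem_erase] at hq
    simp only [hw]
    exact if_neg hq.1
  have hT2 : Valid (Finset.Icc j (2^(s+1)+1))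
      (CTree.eqTest j (CTree.leaf j) (perfect s (2^s+2))) := by
    constructor
    · intro x hx
      simp only [leaves] at hx
      rw [Finset.mem_Icc]
      rcases Finset.mem_union.mp hx with h | h
      · rw [Finset.mem_singleton] at h; omega
      · have := Finset.mem_Ico.mp (perfect_leaves s (2^s+2) h)
        omega
    · intro q hq
      rw [Finset.mem_Icc] at hq
      by_cases hqj : q = j
      · simp [searchKey, hqj]
      · simp only [searchKey, if_neg hqj]
        exact (perfect_search s (2^s+2) q (by omega) (by omega)).1
  have hdj2 : depthOf (CTree.eqTest j (CTree.leaf j) (perfect s (2^s+2))) j = 1 := by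
    simp [depthOf]
  have hd2 : ∀ q ∈ (Finset.Icc j (2^(s+1)+1)).erase j,
      depthOf (CTree.eqTest j (CTree.leaf j) (perfect s (2^s+2))) q = s + 1 := by
    intro q hq
    rw [Finset.mem_erase, Finset.mem_Icc] at hq
    simp only [depthOf, if_neg hq.1]
    rw [(perfect_search s (2^s+2) q (by omega) (by omega)).2]
  have hopt2 : OPT w (Finset.Icc j (2^(s+1)+1)) = V + ((s:ℝ)+1) * 2^s :=
    opt_value w _ j V s hj2 hcard2 hw2a hwj hVs _ hT2 hdj2 hd2
  -- Instance 3 : Icc 1 (2^(s+1)+1)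
  have hj3 : j ∈ Finset.Icc 1 (2^(s+1)+1) := by rw [Finset.mem_Icc]; omega
  have hcard3 : ((Finset.Icc 1 (2^(s+1)+1)).erase j).card = 2^(s+1) := by
    rw [Finset.card_erase_of_mem hj3, Nat.card_Icc]
    omega
  have hw3a : ∀ q ∈ (Finset.Icc 1 (2^(s+1)+1)).erase j, w q = 1 := by
    intro q hq
    rw [Finset.mem_erase] at hq
    simp only [hw]
    exact if_neg hq.1
  have hT3 : Valid (Finset.Icc 1 (2^(s+1)+1))
      (CTree.eqTest j (CTree.leaf j)
        (CTree.ltTest j (perfect s 1) (perfect s (2^s+2)))) := by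
    constructor
    · intro x hx
      simp only [leaves] at hx
      rw [Finset.mem_Icc]
      rcases Finset.mem_union.mp hx with h | h
      · rw [Finset.mem_singleton] at h; omega
      · rcases Finset.mem_union.mp h with h' | h'
        · have := Finset.mem_Ico.mp (perfect_leaves s 1 h')
          omega
        · have := Finset.mem_Ico.mp (perfect_leaves s (2^s+2) h')
          omega
    · intro q hq
      rw [Finset.mem_Icc] at hq
      by_cases hqj : q = j
      · simp [searchKey, hqj]
      · by_cases hlt : q < j
        · simp only [searchKey, if_neg hqj, if_pos hlt]
          exact (perfect_search s 1 q (by omega) (by omega)).1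
        · simp only [searchKey, if_neg hqj, if_neg hlt]
          exact (perfect_search s (2^s+2) q (by omega) (by omega)).1
  have hdj3 : depthOf (CTree.eqTest j (CTree.leaf j)
      (CTree.ltTest j (perfect s 1) (perfect s (2^s+2)))) j = 1 := by
    simp [depthOf]
  have hd3 : ∀ q ∈ (Finset.Icc 1 (2^(s+1)+1)).erase j,
      depthOf (CTree.eqTest j (CTree.leaf j)
        (CTree.ltTest j (perfect s 1) (perfect s (2^s+2)))) q = (s+1) + 1 := by
    intro q hq
    rw [Finset.mem_erase, Finset.mem_Icc] at hq
    by_cases hlt : q < j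
    · simp only [depthOf, if_neg hq.1, if_pos hlt]
      rw [(perfect_search s 1 q (by omega) (by omega)).2]
    · simp only [depthOf, if_neg hq.1, if_neg hlt]
      rw [(perfect_search s (2^s+2) q (by omega) (by omega)).2]
  have hopt3 : OPT w (Finset.Icc 1 (2^(s+1)+1)) = V + ((s:ℝ)+2) * 2^(s+1) := by
    rw [opt_value w _ j V (s+1) hj3 hcard3 hw3a hwj hVs1 _ hT3 hdj3 hd3]
    push_cast
    ring
  -- Singleton
  have hsingle : OPT w ({j} : Finset ℕ) = 0 := opt_single w j (hwj ▸ hV0)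
  refine ⟨hopt1, hopt2, hopt3, ?_⟩
  rw [hsingle, hopt1, hopt2, hopt3]
  have hpr : (2:ℝ)^(s+1) = 2 * 2^s := by rw [pow_succ]; ring
  rw [hpr] at hV ⊢
  nlinarith [hV]

end TwoWCST
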